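/- Let Π be an LP^MLN program and let Π' be the program obtained from Π by deleting all of its soft integrity constraints, i.e., all soft formulas of the form w : ¬F. Then the soft stable models of Π and of Π' coincide: SSM(Π) = SSM(Π'). -/

import Mathlib

open Filter

attribute [local instance] Classical.propDecidable

/-- Propositional formulas over atoms `At`, built from atoms and `⊥`
    using `∧`, `∨`, `→`. -/
inductive Formula (At : Type) where
  | bot  : Formula At
  | atom : At → Formula At
  | and  : Formula At → Formula At → Formula At
  | or   : Formula At → Formula At → Formula At
  | imp  : Formula At → Formula At → Formula At

namespace Formula

variable {At : Type}

/-- `¬F` abbreviates `F → ⊥`. -/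
def neg (F : Formula At) : Formula At := imp F bot

/-- Classical satisfaction of a formula by an interpretation `X ⊆ At`. -/
def sat (X : Finset At) : Formula At → Prop
  | bot => False
  | atom a => a ∈ X
  | and F G => sat X F ∧ sat X G
  | or F G => sat X F ∨ sat X G
  | imp F G => sat X F → sat X G

/-- The reduct `F^X`: every maximal subformula not satisfied by `X` is
    replaced by `⊥`. -/
noncomputable def reduct (X : Finset At) : Formula At → Formula At
  | bot => bot
  | atom a => if sat X (atom a) then atom a else bot
  | and F G => if sat X (and F G) then and (reduct X F) (reduct X G) else bot
  | or F G => if sat X (or F G) then or (reduct X F) (reduct X G) else bot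
  | imp F G => if sat X (imp F G) then imp (reduct X F) (reduct X G) else bot

end Formula

variable {At : Type}

/-- `X` satisfies every formula in `Γ`. -/
def SatAll (X : Finset At) (Γ : Set (Formula At)) : Prop := ∀ F ∈ Γ, F.sat X

/-- `X` is a stable model of `Γ` (Ferraris semantics): `X` satisfies `Γ` and no
    proper subset of `X` satisfies the reduct `Γ^X`. -/
def IsStable (X : Finset At) (Γ : Set (Formula At)) : Prop :=
  SatAll X Γ ∧ ∀ Y : Finset At, Y ⊂ X → ¬ SatAll Y (Formula.reduct X '' Γ)

/-- Weak constraint `:~ F [w, l]`. -/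
structure WeakConstraint (At : Type) where
  formula : Formula At
  weight : ℝ
  level : ℕ

/-- `Cost_Ω(X, l)`: sum of the weights `w` over all `:~ F [w, l]` in `Ω` at level `l`
    whose formula is satisfied by `X`. -/
noncomputable def Cost (Ω : Finset (WeakConstraint At)) (X : Finset At) (l : ℕ) : ℝ :=
  ∑ c ∈ Ω.filter (fun c => c.level = l ∧ c.formula.sat X), c.weight

/-- `X` is an optimal stable model of `Γ ∪ Ω`. -/
def OptStable (Γ : Set (Formula At)) (Ω : Finset (WeakConstraint At)) (X : Finset At) : Prop :=
  IsStable X Γ ∧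
    ¬ ∃ Y : Finset At, IsStable Y Γ ∧ ∃ l : ℕ,
        Cost Ω Y l < Cost Ω X l ∧ ∀ l' : ℕ, l < l' → Cost Ω Y l' = Cost Ω X l'

/-- A weight is either the symbolic infinite weight `α` or a real number. -/
inductive Weight where
  | alpha : Weight
  | soft : ℝ → Weight

/-- The real value of a weight when the real number `a` is substituted for `α`. -/
def Weight.val (a : ℝ) : Weight → ℝ
  | .alpha => a
  | .soft w => w

/-- A weighted formula `w : F`. -/
structure WFormula (At : Type) where
  weight : Weight
  formula : Formula At

/-- A hard formula `α : F`. -/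
def WFormula.isHard (p : WFormula At) : Prop := p.weight = Weight.alpha

/-- A soft formula `w : F` with `w` a real number. -/
def WFormula.isSoft (p : WFormula At) : Prop := ∃ w : ℝ, p.weight = Weight.soft w

/-- `hard(Π)`. -/
noncomputable def hardPart (P : Finset (WFormula At)) : Finset (WFormula At) :=
  P.filter (fun p => p.isHard)

/-- `soft(Π)`. -/
noncomputable def softPart (P : Finset (WFormula At)) : Finset (WFormula At) :=
  P.filter (fun p => p.isSoft)

/-- `Π_X`: the weighted formulas of `Π` whose formula is satisfied by `X`. -/
noncomputable def satPart (P : Finset (WFormula At)) (X : Finset At) : Finset (WFormula At) :=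
  P.filter (fun p => p.formula.sat X)

/-- `SSM(Π)`: the soft stable models of the LP^MLN program `Π`. -/
def SSM (P : Finset (WFormula At)) : Set (Finset At) :=
  { X | IsStable X (WFormula.formula '' (↑(satPart P X) : Set (WFormula At))) }

/-- `W_Π(X, a)`. -/
noncomputable def Wgt (P : Finset (WFormula At)) (X : Finset At) (a : ℝ) : ℝ :=
  if X ∈ SSM P then Real.exp (∑ p ∈ satPart P X, p.weight.val a) else 0

/-- The quotient whose limit as `a → ∞` defines `P_Π(X)`. -/
noncomputable def ratio [Fintype At] (P : Finset (WFormula At)) (X : Finset At) (a : ℝ) : ℝ :=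
  Wgt P X a / ∑ Y ∈ Finset.univ.filter (fun Y => Y ∈ SSM P), Wgt P Y a

/-- `SSM'(Π)`: soft stable models satisfying all hard formulas. -/
def SSM' (P : Finset (WFormula At)) : Set (Finset At) :=
  { X | X ∈ SSM P ∧ ∀ p ∈ P, p.isHard → p.formula.sat X }

/-- `W'_Π(X)` (alternative semantics). -/
noncomputable def Wgt' (P : Finset (WFormula At)) (X : Finset At) : ℝ :=
  if X ∈ SSM' P then
    Real.exp (∑ p ∈ (softPart P).filter (fun p => p.formula.sat X), p.weight.val 0)
  else 0

/-- `P'_Π(X)` (alternative semantics). -/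
noncomputable def Pr' [Fintype At] (P : Finset (WFormula At)) (X : Finset At) : ℝ :=
  Wgt' P X / ∑ Y : Finset At, Wgt' P Y

/-- A plingo program: hard formulas, soft integrity constraints (a real weight
    together with the constraint formula), and weak constraints. -/
structure PlingoProgram (At : Type) where
  hard : Finset (Formula At)
  soft : Finset (ℝ × Formula At)
  weak : Finset (WeakConstraint At)

/-- `OSM(Π)`: optimal stable models of `hard(Π) ∪ weak(Π)`. -/
def OSM (P : PlingoProgram At) : Set (Finset At) :=
  { X | OptStable (↑P.hard) P.weak X }

/-- `W''_Π(X)`. -/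
noncomputable def Wgt'' (P : PlingoProgram At) (X : Finset At) : ℝ :=
  if X ∈ OSM P then Real.exp (∑ p ∈ P.soft.filter (fun p => p.2.sat X), p.1) else 0

/-- `P''_Π(X)`. -/
noncomputable def Pr'' [Fintype At] (P : PlingoProgram At) (X : Finset At) : ℝ :=
  Wgt'' P X / ∑ Y ∈ Finset.univ.filter (fun Y => Y ∈ OSM P), Wgt'' P Y

/-- A soft integrity constraint: a soft formula of the form `w : ¬F`. -/
def WFormula.isSoftIC {At : Type} (p : WFormula At) : Prop :=
  p.isSoft ∧ ∃ F : Formula At, p.formula = F.neg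


/-
A soft integrity constraint `w : ¬F` belongs to `Π_X` only when `X ⊭ F`. Then `F^X = ⊥`, so the
reduct `(¬F)^X` is `⊥ → ⊥`, which every interpretation satisfies: such formulas constrain neither
`X` itself nor the candidate subsets `Y ⊊ X` in the minimality condition.
-/

namespace Formula

theorem reduct_of_not_sat {X : Finset At} {F : Formula At} (h : ¬ F.sat X) :
    F.reduct X = bot := by
  cases F <;> simp only [reduct] <;> first | rfl | exact if_neg h

theorem sat_reduct_neg {X : Finset At} {F : Formula At} (h : F.neg.sat X) (Y : Finset At) :
    (F.neg.reduct X).sat Y := by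
  have hF : ¬ F.sat X := h
  simp only [neg, reduct, reduct_of_not_sat hF, sat, hF, imp_false, not_false_eq_true, if_true]

end Formula

theorem satAll_union {X : Finset At} {Γ Δ : Set (Formula At)} :
    SatAll X (Γ ∪ Δ) ↔ SatAll X Γ ∧ SatAll X Δ := by
  simp only [SatAll, Set.mem_union, or_imp, forall_and]

theorem isStable_union_iff {X : Finset At} {Γ Δ : Set (Formula At)}
    (hΔ : ∀ F ∈ Δ, F.sat X ∧ ∀ Y, (F.reduct X).sat Y) :
    IsStable X (Γ ∪ Δ) ↔ IsStable X Γ := by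
  have hX : SatAll X Δ := fun F hF => (hΔ F hF).1
  have hY : ∀ Y, SatAll Y (Formula.reduct X '' Δ) := by
    rintro Y _ ⟨F, hF, rfl⟩
    exact (hΔ F hF).2 Y
  simp only [IsStable, Set.image_union, satAll_union, hX, hY, and_true]

theorem satPart_filter (P : Finset (WFormula At)) (X : Finset At) (q : WFormula At → Prop)
    [DecidablePred q] :
    satPart (P.filter q) X = (satPart P X).filter q := by
  simp only [satPart, Finset.filter_comm]

theorem ssm_delete_soft_integrity_constraints_general {At : Type}
    (P : Finset (WFormula At)) :
    SSM P = SSM (P.filter (fun p => ¬ p.isSoftIC)) := by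
  ext X
  have hsplit : WFormula.formula '' (↑(satPart P X) : Set (WFormula At)) =
      WFormula.formula '' ↑(satPart (P.filter (fun p => ¬ p.isSoftIC)) X) ∪
        WFormula.formula '' ↑((satPart P X).filter WFormula.isSoftIC) := by
    rw [satPart_filter, ← Set.image_union, ← Finset.coe_union, Finset.union_comm,
      Finset.filter_union_filter_not_eq]
  have hIC : ∀ F ∈ WFormula.formula '' ↑((satPart P X).filter WFormula.isSoftIC),
      F.sat X ∧ ∀ Y, (F.reduct X).sat Y := by
    rintro _ ⟨p, hp, rfl⟩
    obtain ⟨hpX, -, F, hF⟩ := Finset.mem_filter.mp hp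
    have hsat : p.formula.sat X := (Finset.mem_filter.mp hpX).2
    rw [hF] at hsat ⊢
    exact ⟨hsat, Formula.sat_reduct_neg hsat⟩
  simp only [SSM, Set.mem_ofPred_eq, hsplit, isStable_union_iff hIC]

/-- deleting all soft integrity constraints from an LP^MLN program
    leaves its soft stable models unchanged. -/
theorem ssm_delete_soft_integrity_constraints {At : Type} [Fintype At]
    (P : Finset (WFormula At)) :
    SSM P = SSM (P.filter (fun p => ¬ p.isSoftIC)) :=
  ssm_delete_soft_integrity_constraints_general P
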